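/- arXiv:2208.11400 — 3 statements merged into one kernel-verified Lean document; each statement's English description precedes it below -/
import Mathlib

section
/- Let S be a causal system (i.e., for every admissible pair of cumulative arrival function A and cumulative departure function D, A ≥ D pointwise and D(t) depends only on A(s) for s ≤ t), whose departure functions are continuous. Suppose each flow f in a finite set F has token-bucket arrival curve γ_{r_f,b_f} (with γ_{r,b}(t)=rt+b for t>0 and 0 at t=0), and that these are the only constraints on the arrivals, and suppose B is a backlog bound: A(t) − D(t) ≤ B for all admissible (A,D) and all t, where A = Σ_f A_f and D = Σ_f D_f. Then the aggregate departure D is constrained by the token-bucket arrival curve γ_{r,B} with r = Σ_{f∈F} r_f; that is, D(t) − D(s) ≤ B + r(t−s) for all s ≤ t. -/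
open scoped NNReal

/-- Token-bucket arrival curve: `γ_{r,b}(t) = r t + b` for `t > 0`, and `0` at `t = 0`. -/
noncomputable def tokenBucket (r b : ℝ) (t : ℝ≥0) : ℝ :=
  if t = 0 then 0 else r * t + b

/-- A cumulative function: non-decreasing, non-negative, starting at 0. -/
def Cumulative (A : ℝ≥0 → ℝ) : Prop :=
  Monotone A ∧ A 0 = 0 ∧ ∀ t, 0 ≤ A t

/-- `A` is constrained by arrival curve `α`. -/
def Constrained (A : ℝ≥0 → ℝ) (α : ℝ≥0 → ℝ) : Prop :=
  ∀ s t : ℝ≥0, s ≤ t → A t - A s ≤ α (t - s)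

/-!
Fix an admissible pair `(A, D)` and times `s < t`. Replace every arrival `A_f` after time `s` by
its greedy extension: the largest continuation compatible with `γ_{r_f,b_f}`, which jumps at `s⁺`
to the level `c_f = inf_{v ≤ s} (A_f v + r_f (s - v) + b_f)` and then grows at rate `r_f`. By the
freedom of arrivals it is admissible; by causality its departures agree with `D` at `s`, so the
backlog bound just after `s` and continuity of departures give `Σ c_f ≤ D s + B`. On the other hand
`A_f t ≤ c_f + r_f (t - s)`, hence `D t ≤ A t ≤ Σ c_f + r (t - s) ≤ D s + B + r (t - s)`.
-/

theorem tokenBucket_sub_of_lt {r b : ℝ} {v t : ℝ≥0} (h : v < t) :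
    tokenBucket r b (t - v) = r * ((t : ℝ) - v) + b := by
  rw [tokenBucket, if_neg (tsub_pos_of_lt h).ne', NNReal.coe_sub h.le]

theorem tokenBucket_sub_le {r b : ℝ} (hb : 0 ≤ b) {v t : ℝ≥0} (h : v ≤ t) :
    tokenBucket r b (t - v) ≤ r * ((t : ℝ) - v) + b := by
  obtain rfl | hlt := h.eq_or_lt
  · simpa [tokenBucket] using hb
  · exact (tokenBucket_sub_of_lt hlt).le

theorem mul_sub_le_tokenBucket {r b : ℝ} (hb : 0 ≤ b) {v t : ℝ≥0} (h : v ≤ t) :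
    r * ((t : ℝ) - v) ≤ tokenBucket r b (t - v) := by
  obtain rfl | hlt := h.eq_or_lt
  · simp [tokenBucket]
  · rw [tokenBucket_sub_of_lt hlt]
    linarith

theorem ContinuousAt.le_of_forall_lt_imp_le {X : Type*} [TopologicalSpace X] [LinearOrder X]
    [OrderTopology X] [DenselyOrdered X] [NoMaxOrder X] {f : X → ℝ} {s : X} {c : ℝ}
    (hf : ContinuousAt f s) (h : ∀ w, s < w → c ≤ f w) : c ≤ f s :=
  ge_of_tendsto (hf.tendsto.mono_left (nhdsWithin_le_nhds (s := Set.Ioi s)))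
    (eventually_nhdsWithin_of_forall h)

/-- The level reached at `s⁺` by the greedy extension of `A` after `s`, i.e. the value at `s⁺`
of the min-plus convolution of `A` restricted to `[0, s]` with `γ_{r,b}`. -/
noncomputable def greedyLevel (A : ℝ≥0 → ℝ) (r b : ℝ) (s : ℝ≥0) : ℝ :=
  ⨅ v : Set.Iic s, A v + r * ((s : ℝ) - (v : ℝ≥0)) + b

/-- The largest continuation after time `s` of `A` that is still constrained by `γ_{r,b}`. -/
noncomputable def greedyExtension (A : ℝ≥0 → ℝ) (r b : ℝ) (s : ℝ≥0) (w : ℝ≥0) : ℝ :=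
  if w ≤ s then A w else greedyLevel A r b s + r * ((w : ℝ) - s)

section Greedy

variable {A : ℝ≥0 → ℝ} {r b : ℝ} {s : ℝ≥0}

theorem le_greedyLevel_add (hA : Constrained A (tokenBucket r b)) (hb : 0 ≤ b) {t : ℝ≥0}
    (hst : s ≤ t) : A t ≤ greedyLevel A r b s + r * ((t : ℝ) - s) := by
  rw [← sub_le_iff_le_add]
  refine le_ciInf fun v => ?_
  have hvt : (v : ℝ≥0) ≤ t := v.2.trans hst
  have := hA v t hvt
  have := tokenBucket_sub_le (r := r) hb hvt
  linarith

theorem le_greedyLevel (hA : Constrained A (tokenBucket r b)) (hb : 0 ≤ b) :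
    A s ≤ greedyLevel A r b s := by
  simpa using le_greedyLevel_add hA hb le_rfl

theorem greedyLevel_le (hA : Constrained A (tokenBucket r b)) (hb : 0 ≤ b) {v : ℝ≥0}
    (hv : v ≤ s) : greedyLevel A r b s ≤ A v + r * ((s : ℝ) - v) + b := by
  refine ciInf_le ⟨A s, ?_⟩ (⟨v, hv⟩ : Set.Iic s)
  rintro _ ⟨u, rfl⟩
  have := hA u s u.2
  have := tokenBucket_sub_le (r := r) hb u.2
  dsimp only
  linarith

theorem greedyExtension_of_le {w : ℝ≥0} (hw : w ≤ s) : greedyExtension A r b s w = A w :=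
  if_pos hw

theorem greedyExtension_of_lt {w : ℝ≥0} (hw : s < w) :
    greedyExtension A r b s w = greedyLevel A r b s + r * ((w : ℝ) - s) :=
  if_neg hw.not_ge

theorem greedyLevel_le_greedyExtension (hr : 0 ≤ r) {w : ℝ≥0} (hw : s < w) :
    greedyLevel A r b s ≤ greedyExtension A r b s w := by
  rw [greedyExtension_of_lt hw]
  have : (s : ℝ) < w := hw
  nlinarith

theorem monotone_greedyExtension (hA : Monotone A) (hAc : Constrained A (tokenBucket r b))
    (hr : 0 ≤ r) (hb : 0 ≤ b) : Monotone (greedyExtension A r b s) := by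
  intro v w hvw
  rcases le_or_gt w s with hw | hw
  · rw [greedyExtension_of_le (hvw.trans hw), greedyExtension_of_le hw]
    exact hA hvw
  rcases le_or_gt v s with hv | hv
  · rw [greedyExtension_of_le hv]
    exact (hA hv).trans <| (le_greedyLevel hAc hb).trans (greedyLevel_le_greedyExtension hr hw)
  · rw [greedyExtension_of_lt hv, greedyExtension_of_lt hw]
    gcongr

theorem cumulative_greedyExtension (hA : Cumulative A) (hAc : Constrained A (tokenBucket r b))
    (hr : 0 ≤ r) (hb : 0 ≤ b) : Cumulative (greedyExtension A r b s) := by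
  have hmono := monotone_greedyExtension (s := s) hA.1 hAc hr hb
  have hzero : greedyExtension A r b s 0 = 0 :=
    (greedyExtension_of_le (zero_le (a := s))).trans hA.2.1
  exact ⟨hmono, hzero, fun w => hzero ▸ hmono (zero_le (a := w))⟩

theorem constrained_greedyExtension (hA : Constrained A (tokenBucket r b)) (hb : 0 ≤ b) :
    Constrained (greedyExtension A r b s) (tokenBucket r b) := by
  intro v w hvw
  rcases le_or_gt w s with hw | hw
  · rw [greedyExtension_of_le (hvw.trans hw), greedyExtension_of_le hw]
    exact hA v w hvw
  rw [greedyExtension_of_lt hw]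
  rcases le_or_gt v s with hv | hv
  · rw [greedyExtension_of_le hv, tokenBucket_sub_of_lt (hv.trans_lt hw)]
    linarith [greedyLevel_le hA hb hv]
  · rw [greedyExtension_of_lt hv]
    linarith [mul_sub_le_tokenBucket (r := r) hb hvw]

end Greedy

/-- Lemma 1 of the paper: under causality (A1), continuity of departures (A2),
token-bucket arrival constraints being the only constraints (A3), and an aggregate
backlog bound `B` (A4), the aggregate departure is constrained by `γ_{r,B}` with
`r = Σ_{f∈F} r_f`. -/
theorem aggregate_departure_token_bucket
    {ι : Type*} (F : Finset ι) (r b : ι → ℝ)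
    (hr : ∀ f, 0 ≤ r f) (hb : ∀ f, 0 ≤ b f)
    (S : Set ((ι → ℝ≥0 → ℝ) × (ι → ℝ≥0 → ℝ)))
    (B : ℝ)
    (hcum : ∀ p ∈ S, (∀ f, Cumulative (p.1 f)) ∧ (∀ f, Cumulative (p.2 f)))
    -- (A1) causality: D ≤ A …
    (hDleA : ∀ p ∈ S, ∀ f ∈ F, ∀ t, p.2 f t ≤ p.1 f t)
    -- … and D(t) depends only on A(s) for s ≤ t
    (hcausal : ∀ p ∈ S, ∀ q ∈ S, ∀ t : ℝ≥0,
      (∀ s ≤ t, ∀ f ∈ F, p.1 f s = q.1 f s) → ∀ f ∈ F, p.2 f t = q.2 f t)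
    -- (A2) continuity of the aggregate departure
    (hcont : ∀ p ∈ S, Continuous fun t => ∑ f ∈ F, p.2 f t)
    -- (A3) every admissible arrival is token-bucket constrained …
    (harr : ∀ p ∈ S, ∀ f ∈ F, Constrained (p.1 f) (tokenBucket (r f) (b f)))
    -- … and these are the only constraints on arrivals
    (hfree : ∀ A : ι → ℝ≥0 → ℝ, (∀ f, Cumulative (A f)) →
      (∀ f ∈ F, Constrained (A f) (tokenBucket (r f) (b f))) →
      ∃ D, (A, D) ∈ S)
    -- (A4) backlog bound for the aggregate
    (hB : ∀ p ∈ S, ∀ t, (∑ f ∈ F, p.1 f t) - (∑ f ∈ F, p.2 f t) ≤ B) :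
    ∀ p ∈ S, Constrained (fun t => ∑ f ∈ F, p.2 f t)
      (tokenBucket (∑ f ∈ F, r f) B) := by
  intro p hp s t hst
  obtain rfl | hlt := hst.eq_or_lt
  · simp [tokenBucket]
  classical
  set c := fun f => greedyLevel (p.1 f) (r f) (b f) s
  set A' := F.piecewise (fun f => greedyExtension (p.1 f) (r f) (b f) s) p.1
  have hA'cum : ∀ f, Cumulative (A' f) := fun f => by
    by_cases hf : f ∈ F
    · simpa [A', hf] using
        cumulative_greedyExtension ((hcum p hp).1 f) (harr p hp f hf) (hr f) (hb f)
    · simpa [A', hf] using (hcum p hp).1 f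
  obtain ⟨D', hq⟩ := hfree A' hA'cum fun f hf => by
    simpa [A', hf] using constrained_greedyExtension (harr p hp f hf) (hb f)
  have hDs : ∑ f ∈ F, D' f s = ∑ f ∈ F, p.2 f s := Finset.sum_congr rfl <|
    hcausal (A', D') hq p hp s fun u hu f hf => by simp [A', hf, greedyExtension_of_le hu]
  have hlevel : ∑ f ∈ F, c f ≤ ∑ f ∈ F, p.2 f s + B := by
    rw [← hDs]
    refine ContinuousAt.le_of_forall_lt_imp_le (f := fun w => ∑ f ∈ F, D' f w + B)
      ((hcont _ hq).continuousAt.add continuousAt_const) fun w hw => ?_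
    have hA'w : ∑ f ∈ F, c f ≤ ∑ f ∈ F, A' f w := Finset.sum_le_sum fun f hf => by
      simpa [A', hf] using greedyLevel_le_greedyExtension (A := p.1 f) (b := b f) (hr f) hw
    linarith [hB (A', D') hq w]
  have hAt : ∑ f ∈ F, p.1 f t ≤ ∑ f ∈ F, c f + (∑ f ∈ F, r f) * ((t : ℝ) - s) := by
    rw [Finset.sum_mul, ← Finset.sum_add_distrib]
    exact Finset.sum_le_sum fun f hf => le_greedyLevel_add (harr p hp f hf) (hb f) hst
  rw [tokenBucket_sub_of_lt hlt]
  linarith [Finset.sum_le_sum fun f hf => hDleA p hp f hf t]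
end

section
/- Let H be a finite set of isotone (order-preserving) mappings from C to C, where C ⊆ (ℝ≥0 ∪ {+∞})^I is closed under componentwise minimum, with I a finite index set. Consider an execution (h_k, s_k, t_k, u_k)_{k≥1} satisfying: h_k ∈ H; 0 < s_k ≤ t_k < u_k; u_{k+1} > u_k; intervals (t_k, u_k] are pairwise disjoint; each h ∈ H occurs infinitely often; and s_k → ∞. Define the memory state x(t) as the piecewise-constant right-continuous function with x(0)=x_0 that jumps at times u_k to x(u_k) = min(x(t_k), h_k(x(s_k))) (componentwise minimum). Then lim_{t→∞} x(t) exists in (ℝ≥0 ∪ {+∞})^I. -/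
/-!
Every write takes a minimum with the memory read at its locking time `t k`, and by the
disjointness of the intervals `(t k, u k]` no other write happens between the previous write
and `t k`. Hence the values of the memory after successive writes form a nonincreasing sequence,
the memory is eventually this sequence read off at the number of writes so far, and a
nonincreasing function converges to its infimum in the complete lattice `(ℝ≥0∞)^I`.
-/

open scoped ENNReal

/-- An execution of a finite set of refinement mappings with a shared memory.
`h k` is the mapping used by the `k`-th completed refinement, `s k` its reading time,
`t k` its locking time and `u k` its unlocking (writing) time.  `x` is the state of
the shared memory over time, with `x 0 = x₀`, piecewise constant between writes, and
updated at each write time `u k` to `min (x (t k)) (h k (x (s k)))` componentwise. -/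
structure Execution (I : Type*) (H : Set ((I → ℝ≥0∞) → (I → ℝ≥0∞)))
    (x₀ : I → ℝ≥0∞) where
  h : ℕ → (I → ℝ≥0∞) → (I → ℝ≥0∞)
  s : ℕ → ℝ
  t : ℕ → ℝ
  u : ℕ → ℝ
  x : ℝ → I → ℝ≥0∞
  /-- (C1) each refinement belongs to `H` -/
  hH : ∀ k, h k ∈ H
  /-- (C2) `0 < s_k ≤ t_k < u_k` -/
  hst : ∀ k, 0 < s k ∧ s k ≤ t k ∧ t k < u k
  /-- (C3) the write times are strictly increasing -/
  hu : StrictMono u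
  /-- (C4) the intervals `(t_k, u_k]` are pairwise disjoint -/
  hdisj : ∀ k k', k ≠ k' → Disjoint (Set.Ioc (t k) (u k)) (Set.Ioc (t k') (u k'))
  /-- (C5) every mapping of `H` is executed infinitely often -/
  hinf : ∀ g ∈ H, ∀ N : ℕ, ∃ k ≥ N, h k = g
  /-- (C6) the reading times tend to infinity -/
  hs : Filter.Tendsto s Filter.atTop Filter.atTop
  /-- the memory starts at `x₀` -/
  hx0 : x 0 = x₀
  /-- the memory is constant on intervals containing no write time -/
  hconst : ∀ τ τ' : ℝ, 0 ≤ τ → τ ≤ τ' →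
    (∀ k, ¬ (τ < u k ∧ u k ≤ τ')) → x τ' = x τ
  /-- the update rule at write times: componentwise minimum with the computed value -/
  hjump : ∀ k, x (u k) = x (t k) ⊓ (h k) (x (s k))

open Filter

namespace Execution

variable {I : Type*} {H : Set ((I → ℝ≥0∞) → (I → ℝ≥0∞))} {x₀ : I → ℝ≥0∞}
  (E : Execution I H x₀)

theorem tendsto_u_atTop : Tendsto E.u atTop atTop :=
  tendsto_atTop_mono (fun k => ((E.hst k).2.1.trans_lt (E.hst k).2.2).le) E.hs

theorem exists_lt_u (τ : ℝ) : ∃ n, τ < E.u n :=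
  (E.tendsto_u_atTop.eventually_gt_atTop τ).exists

theorem u_le_t_succ (n : ℕ) : E.u n ≤ E.t (n + 1) := by
  by_contra! h
  have hmem : E.u n ∈ Set.Ioc (E.t (n + 1)) (E.u (n + 1)) := ⟨h, (E.hu n.lt_succ_self).le⟩
  exact Set.disjoint_left.1 (E.hdisj n (n + 1) n.succ_ne_self.symm)
    ⟨(E.hst n).2.2, le_rfl⟩ hmem

/-- The time of the `n`-th write, the initialisation at time `0` counting as the zeroth. -/
def writeTime : ℕ → ℝ
  | 0 => 0
  | n + 1 => E.u n

theorem writeTime_nonneg (n : ℕ) : 0 ≤ E.writeTime n := by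
  cases n with
  | zero => exact le_rfl
  | succ n => exact (E.hst n).1.le.trans ((E.hst n).2.1.trans (E.hst n).2.2.le)

theorem writeTime_le_t (n : ℕ) : E.writeTime n ≤ E.t n := by
  cases n with
  | zero => exact (E.hst 0).1.le.trans (E.hst 0).2.1
  | succ n => exact E.u_le_t_succ n

theorem x_eq_x_writeTime {n : ℕ} {τ : ℝ} (hle : E.writeTime n ≤ τ) (hlt : τ < E.u n) :
    E.x τ = E.x (E.writeTime n) := by
  refine E.hconst _ τ (E.writeTime_nonneg n) hle fun k ⟨hk_gt, hk_le⟩ => ?_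
  have hkn : k < n := E.hu.lt_iff_lt.1 (hk_le.trans_lt hlt)
  cases n with
  | zero => exact Nat.not_lt_zero k hkn
  | succ m => exact absurd (E.hu.lt_iff_lt.1 hk_gt) (by omega)

theorem antitone_x_writeTime : Antitone fun n => E.x (E.writeTime n) := by
  refine antitone_nat_of_succ_le fun n => ?_
  calc E.x (E.u n) = E.x (E.t n) ⊓ E.h n (E.x (E.s n)) := E.hjump n
    _ ≤ E.x (E.t n) := inf_le_left
    _ = E.x (E.writeTime n) := E.x_eq_x_writeTime (E.writeTime_le_t n) (E.hst n).2.2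

open Classical in
/-- The number of writes at times `≤ τ`. -/
noncomputable def writeCount (τ : ℝ) : ℕ := Nat.find (E.exists_lt_u τ)

theorem monotone_writeCount : Monotone E.writeCount := fun _ _ hle =>
  Nat.find_mono fun _ hn => hle.trans_lt hn

theorem writeTime_writeCount_le {τ : ℝ} (hτ : 0 ≤ τ) : E.writeTime (E.writeCount τ) ≤ τ := by
  classical
  unfold writeCount
  cases hN : Nat.find (E.exists_lt_u τ) with
  | zero => exact hτ
  | succ m => exact not_lt.1 (Nat.find_min (E.exists_lt_u τ) (by omega : m < _))

theorem x_eq_x_writeTime_writeCount {τ : ℝ} (hτ : 0 ≤ τ) :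
    E.x τ = E.x (E.writeTime (E.writeCount τ)) := by
  classical
  exact E.x_eq_x_writeTime (E.writeTime_writeCount_le hτ) (Nat.find_spec (E.exists_lt_u τ))

end Execution

theorem memory_state_converges_general {I : Type*}
    (H : Set ((I → ℝ≥0∞) → (I → ℝ≥0∞)))
    (x₀ : I → ℝ≥0∞)
    (E : Execution I H x₀) :
    ∃ L : I → ℝ≥0∞, Filter.Tendsto E.x Filter.atTop (nhds L) := by
  have hanti : Antitone fun τ => E.x (E.writeTime (E.writeCount τ)) :=
    E.antitone_x_writeTime.comp_monotone E.monotone_writeCount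
  have heq : (fun τ => E.x (E.writeTime (E.writeCount τ))) =ᶠ[atTop] E.x :=
    (eventually_ge_atTop 0).mono fun _ hτ => (E.x_eq_x_writeTime_writeCount hτ).symm
  exact ⟨_, (tendsto_atTop_iInf hanti).congr' heq⟩

/-- Lemma 2 (first part): for any execution of a finite set of isotone mappings on a
subset `C` of `(ℝ≥0 ∪ {+∞})^I` closed under componentwise minimum, the memory state
`x(t)` converges as `t → ∞`. -/
theorem memory_state_converges {I : Type*} [Fintype I]
    (C : Set (I → ℝ≥0∞)) (hCmin : ∀ x ∈ C, ∀ y ∈ C, x ⊓ y ∈ C)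
    (H : Set ((I → ℝ≥0∞) → (I → ℝ≥0∞))) (hHfin : H.Finite)
    (hiso : ∀ h ∈ H, ∀ x ∈ C, ∀ y ∈ C, x ≤ y → h x ≤ h y)
    (hmap : ∀ h ∈ H, ∀ x ∈ C, h x ∈ C)
    (x₀ : I → ℝ≥0∞) (hx₀ : x₀ ∈ C)
    (E : Execution I H x₀) :
    ∃ L : I → ℝ≥0∞, Filter.Tendsto E.x Filter.atTop (nhds L) :=
  memory_state_converges_general H x₀ E
end

section
/- Under the same hypotheses as the previous statement, the limit x* = lim_{t→∞} x(t) is the same for any two executions of H starting from the same initial value x_0: if (h_k, s_k, t_k, u_k) and (h'_k, s'_k, t'_k, u'_k) are two executions satisfying the conditions (each with its own memory trajectory x and x', both starting at x_0), then lim_{t→∞} x(t) = lim_{t→∞} x'(t). -/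
open scoped ENNReal

namespace Execution

variable {I : Type*} {H : Set ((I → ℝ≥0∞) → (I → ℝ≥0∞))} {x₀ : I → ℝ≥0∞}

lemma t_pos (E : Execution I H x₀) (k : ℕ) : 0 < E.t k :=
  lt_of_lt_of_le (E.hst k).1 (E.hst k).2.1

lemma u_pos (E : Execution I H x₀) (k : ℕ) : 0 < E.u k :=
  lt_trans (E.t_pos k) (E.hst k).2.2

lemma u_tendsto (E : Execution I H x₀) : Filter.Tendsto E.u Filter.atTop Filter.atTop :=
  Filter.tendsto_atTop_mono
    (fun k => le_trans (E.hst k).2.1 (le_of_lt (E.hst k).2.2)) E.hs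

lemma writes_bounded (E : Execution I H x₀) (b : ℝ) : ∃ N, ∀ k, E.u k ≤ b → k < N := by
  rcases Filter.eventually_atTop.1 (E.u_tendsto.eventually_gt_atTop b) with ⟨N, hN⟩
  exact ⟨N, fun k hk => by
    by_contra h; push_neg at h; exact absurd hk (not_le.2 (hN k h))⟩

lemma exists_max_write (E : Execution I H x₀) (τ : ℝ) (h : ∃ j, E.u j ≤ τ) :
    ∃ K, E.u K ≤ τ ∧ ∀ j, E.u j ≤ τ → j ≤ K := by
  classical
  obtain ⟨N, hN⟩ := E.writes_bounded τ
  obtain ⟨j0, hj0⟩ := h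
  set S := (Finset.range N).filter (fun k => E.u k ≤ τ) with hSdef
  have hS : S.Nonempty := ⟨j0, Finset.mem_filter.2 ⟨Finset.mem_range.2 (hN _ hj0), hj0⟩⟩
  exact ⟨S.max' hS, (Finset.mem_filter.1 (S.max'_mem hS)).2,
    fun j hj => Finset.le_max' S j (Finset.mem_filter.2 ⟨Finset.mem_range.2 (hN _ hj), hj⟩)⟩

/-- value at `τ` equals value at the last write before `τ` -/
lemma x_eq_last_write (E : Execution I H x₀) {τ : ℝ} {K : ℕ}
    (hK1 : E.u K ≤ τ) (hK2 : ∀ j, E.u j ≤ τ → j ≤ K) :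
    E.x τ = E.x (E.u K) :=
  E.hconst (E.u K) τ (le_of_lt (E.u_pos K)) hK1
    (fun j hj => absurd (hK2 j hj.2) (not_le.2 (E.hu.lt_iff_lt.1 hj.1)))

lemma x_eq_x0 (E : Execution I H x₀) {τ : ℝ} (hτ : 0 ≤ τ)
    (hno : ∀ j, τ < E.u j) : E.x τ = x₀ := by
  rw [E.hconst 0 τ le_rfl hτ (fun k hk => absurd hk.2 (not_le.2 (hno k))), E.hx0]

lemma antitone_aux (E : Execution I H x₀) : ∀ n : ℕ, ∀ a b : ℝ, 0 ≤ a → a ≤ b →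
    (∀ k, E.u k ≤ b → k < n) → E.x b ≤ E.x a := by
  intro n
  induction n using Nat.strong_induction_on with
  | _ n IH =>
    intro a b ha hab hn
    by_cases hw : ∃ j, a < E.u j ∧ E.u j ≤ b
    · obtain ⟨j0, hj0a, hj0b⟩ := hw
      obtain ⟨K, hK1, hK2⟩ := E.exists_max_write b ⟨j0, hj0b⟩
      have hKa : a < E.u K := lt_of_lt_of_le hj0a (E.hu.monotone (hK2 _ hj0b))
      have hxb : E.x b = E.x (E.u K) := E.x_eq_last_write hK1 hK2
      have hxuK : E.x (E.u K) ≤ E.x (E.t K) := by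
        rw [E.hjump K]; exact inf_le_left
      by_cases hta : E.t K < a
      · have hxa : E.x a = E.x (E.t K) := by
          refine E.hconst (E.t K) a (le_of_lt (E.t_pos K)) (le_of_lt hta) (fun j hj => ?_)
          rcases eq_or_ne j K with rfl | hjK
          · exact absurd hj.2 (not_le.2 hKa)
          · exact Set.disjoint_left.1 (E.hdisj j K hjK)
              ⟨(E.hst j).2.2, le_rfl⟩ ⟨hj.1, le_of_lt (lt_of_le_of_lt hj.2 hKa)⟩
        rw [hxb, hxa]; exact hxuK
      · push_neg at hta
        have hKn : K < n := hn K hK1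
        have h2 : E.x (E.t K) ≤ E.x a := IH K hKn a (E.t K) ha hta
          (fun j hj => E.hu.lt_iff_lt.1 (lt_of_le_of_lt hj (E.hst K).2.2))
        rw [hxb]; exact le_trans hxuK h2
    · push_neg at hw
      rw [E.hconst a b ha hab (fun k hk => absurd hk.2 (not_le.2 (hw k hk.1)))]

lemma antitone' (E : Execution I H x₀) {a b : ℝ} (ha : 0 ≤ a) (hab : a ≤ b) :
    E.x b ≤ E.x a := by
  obtain ⟨N, hN⟩ := E.writes_bounded b
  exact E.antitone_aux N a b ha hab hN

lemma mem_C_aux {C : Set (I → ℝ≥0∞)} (hCmin : ∀ x ∈ C, ∀ y ∈ C, x ⊓ y ∈ C)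
    (hmap : ∀ h ∈ H, ∀ x ∈ C, h x ∈ C) (hx₀ : x₀ ∈ C) (E : Execution I H x₀) :
    ∀ n : ℕ, ∀ τ : ℝ, 0 ≤ τ → (∀ k, E.u k ≤ τ → k < n) → E.x τ ∈ C := by
  intro n
  induction n using Nat.strong_induction_on with
  | _ n IH =>
    intro τ hτ hn
    by_cases hw : ∃ j, E.u j ≤ τ
    · obtain ⟨K, hK1, hK2⟩ := E.exists_max_write τ hw
      rw [E.x_eq_last_write hK1 hK2, E.hjump K]
      have hbt : ∀ j, E.u j ≤ E.t K → j < K :=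
        fun j hj => E.hu.lt_iff_lt.1 (lt_of_le_of_lt hj (E.hst K).2.2)
      have hbs : ∀ j, E.u j ≤ E.s K → j < K :=
        fun j hj => hbt j (le_trans hj (E.hst K).2.1)
      have hKn : K < n := hn K hK1
      exact hCmin _ (IH K hKn _ (le_of_lt (E.t_pos K)) hbt) _
        (hmap _ (E.hH K) _ (IH K hKn _ (le_of_lt (E.hst K).1) hbs))
    · push_neg at hw
      rw [E.x_eq_x0 hτ hw]; exact hx₀

lemma mem_C {C : Set (I → ℝ≥0∞)} (hCmin : ∀ x ∈ C, ∀ y ∈ C, x ⊓ y ∈ C)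
    (hmap : ∀ h ∈ H, ∀ x ∈ C, h x ∈ C) (hx₀ : x₀ ∈ C) (E : Execution I H x₀)
    {τ : ℝ} (hτ : 0 ≤ τ) : E.x τ ∈ C := by
  obtain ⟨N, hN⟩ := E.writes_bounded τ
  exact mem_C_aux hCmin hmap hx₀ E N τ hτ hN

/-- Key lemma: any memory state of `E` is dominated below by some write value of `E'`. -/
lemma key {C : Set (I → ℝ≥0∞)} (hCmin : ∀ x ∈ C, ∀ y ∈ C, x ⊓ y ∈ C)
    (hiso : ∀ h ∈ H, ∀ x ∈ C, ∀ y ∈ C, x ≤ y → h x ≤ h y)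
    (hmap : ∀ h ∈ H, ∀ x ∈ C, h x ∈ C) (hx₀ : x₀ ∈ C)
    (E E' : Execution I H x₀) :
    ∀ n : ℕ, ∀ τ : ℝ, 0 ≤ τ → (∀ k, E.u k ≤ τ → k < n) →
      ∃ m, E'.x (E'.u m) ≤ E.x τ := by
  intro n
  induction n using Nat.strong_induction_on with
  | _ n IH =>
    intro τ hτ hn
    by_cases hw : ∃ j, E.u j ≤ τ
    · obtain ⟨K, hK1, hK2⟩ := E.exists_max_write τ hw
      have hbt : ∀ j, E.u j ≤ E.t K → j < K :=
        fun j hj => E.hu.lt_iff_lt.1 (lt_of_le_of_lt hj (E.hst K).2.2)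
      have hbs : ∀ j, E.u j ≤ E.s K → j < K :=
        fun j hj => hbt j (le_trans hj (E.hst K).2.1)
      have hKn : K < n := hn K hK1
      obtain ⟨m₁, hm₁⟩ := IH K hKn (E.t K) (le_of_lt (E.t_pos K)) hbt
      obtain ⟨m₂, hm₂⟩ := IH K hKn (E.s K) (le_of_lt (E.hst K).1) hbs
      obtain ⟨N, hN⟩ := Filter.eventually_atTop.1 (E'.hs.eventually_ge_atTop (E'.u m₂))
      obtain ⟨k', hk'ge, hk'h⟩ := E'.hinf (E.h K) (E.hH K) (max N m₁)
      refine ⟨k', ?_⟩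
      rw [E.x_eq_last_write hK1 hK2, E.hjump K]
      have hsC' : E'.x (E'.s k') ∈ C := mem_C hCmin hmap hx₀ E' (le_of_lt (E'.hst k').1)
      have hsC : E.x (E.s K) ∈ C := mem_C hCmin hmap hx₀ E (le_of_lt (E.hst K).1)
      have hs'le : E'.x (E'.s k') ≤ E.x (E.s K) := by
        refine le_trans ?_ hm₂
        exact E'.antitone' (le_of_lt (E'.u_pos m₂)) (hN k' (le_trans (le_max_left _ _) hk'ge))
      refine le_inf ?_ ?_
      · refine le_trans ?_ hm₁
        exact E'.antitone' (le_of_lt (E'.u_pos m₁))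
          (E'.hu.monotone (le_trans (le_max_right _ _) hk'ge))
      · calc E'.x (E'.u k') ≤ E'.h k' (E'.x (E'.s k')) := by
              rw [E'.hjump k']; exact inf_le_right
          _ = E.h K (E'.x (E'.s k')) := by rw [hk'h]
          _ ≤ E.h K (E.x (E.s K)) := hiso _ (E.hH K) _ hsC' _ hsC hs'le
    · push_neg at hw
      refine ⟨0, ?_⟩
      rw [E.x_eq_x0 hτ hw]
      calc E'.x (E'.u 0) ≤ E'.x (E'.t 0) := by rw [E'.hjump 0]; exact inf_le_left
        _ ≤ E'.x 0 := E'.antitone' le_rfl (le_of_lt (E'.t_pos 0))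
        _ = x₀ := E'.hx0

end Execution

/-- Lemma 2 (second part): the limit of the memory state is the same for any two
executions of `H` starting from the same initial value `x₀`. -/
theorem memory_state_limit_unique {I : Type*} [Fintype I]
    (C : Set (I → ℝ≥0∞)) (hCmin : ∀ x ∈ C, ∀ y ∈ C, x ⊓ y ∈ C)
    (H : Set ((I → ℝ≥0∞) → (I → ℝ≥0∞))) (hHfin : H.Finite)
    (hiso : ∀ h ∈ H, ∀ x ∈ C, ∀ y ∈ C, x ≤ y → h x ≤ h y)
    (hmap : ∀ h ∈ H, ∀ x ∈ C, h x ∈ C)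
    (x₀ : I → ℝ≥0∞) (hx₀ : x₀ ∈ C)
    (E E' : Execution I H x₀) (L L' : I → ℝ≥0∞)
    (hL : Filter.Tendsto E.x Filter.atTop (nhds L))
    (hL' : Filter.Tendsto E'.x Filter.atTop (nhds L')) :
    L = L' := by
  have main : ∀ (F F' : Execution I H x₀) (M M' : I → ℝ≥0∞),
      Filter.Tendsto F.x Filter.atTop (nhds M) →
      Filter.Tendsto F'.x Filter.atTop (nhds M') → M' ≤ M := by
    intro F F' M M' hM hM'
    refine ge_of_tendsto hM ?_
    filter_upwards [Filter.eventually_ge_atTop (0 : ℝ)] with τ hτ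
    obtain ⟨N, hN⟩ := F.writes_bounded τ
    obtain ⟨m, hm⟩ := Execution.key hCmin hiso hmap hx₀ F F' N τ hτ hN
    refine le_trans (le_of_tendsto hM' ?_) hm
    filter_upwards [Filter.eventually_ge_atTop (F'.u m)] with σ hσ
    exact F'.antitone' (le_of_lt (F'.u_pos m)) hσ
  exact le_antisymm (main E' E L' L hL' hL) (main E E' L L' hL hL')
end
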